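/- arXiv:2305.18788 — 2 statements merged into one kernel-verified Lean document; each statement's English description precedes it below -/
import Mathlib

section
/- Under the same hypotheses on the kernel Q (normalized, symmetric in the stated senses, positive diagonal, balanced w.r.t. a strictly positive μ), if the initial distribution p is irreducible — i.e., there exist ε > 0 and t₀ such that T_t(p)(τ) ≥ ε for all t ≥ t₀ and all τ ∈ Ω, where T_t denotes t iterations of p ↦ p∘p — then T_t(p) converges as t → ∞ to some strictly positive probability measure ν on Ω which is a fixed point of the dynamics. -/
open Filter

/-- One step of the quadratic mass-action dynamics `p ↦ p ∘ p`. -/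
noncomputable def stepQ {Ω : Type*} [Fintype Ω]
    (Q : Ω → Ω → Ω → Ω → ℝ) (p : Ω → ℝ) : Ω → ℝ :=
  fun τ => ∑ σ, ∑ σ', ∑ τ', p σ * p σ' * Q σ σ' τ τ'

section Aux

variable {Ω : Type*} [Fintype Ω]

/-- Discrete KL divergence. -/
noncomputable def klD (p q : Ω → ℝ) : ℝ := ∑ τ, p τ * Real.log (p τ / q τ)

/-- Pair distribution after one step. -/
noncomputable def pair2 (Q : Ω → Ω → Ω → Ω → ℝ) (p : Ω → ℝ) : Ω → Ω → ℝ :=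
  fun τ τ' => ∑ σ, ∑ σ', p σ * p σ' * Q σ σ' τ τ'

lemma gibbs_point {a b : ℝ} (ha : 0 ≤ a) (hb : 0 ≤ b) (hba : b = 0 → a = 0) :
    a - b ≤ a * Real.log (a / b) := by
  rcases eq_or_lt_of_le ha with h | h
  · simp [← h, hb]
  · have hb' : 0 < b := by
      rcases eq_or_lt_of_le hb with hb0 | hb0
      · exact absurd (hba hb0.symm) (ne_of_gt h)
      · exact hb0
    have hlog := Real.log_le_sub_one_of_pos (div_pos hb' h)
    have hsplit : Real.log (a / b) = -Real.log (b / a) := by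
      rw [Real.log_div hb'.ne' h.ne', Real.log_div h.ne' hb'.ne']; ring
    have h2 := mul_le_mul_of_nonneg_left hlog h.le
    have h3 : a * (b / a - 1) = b - a := by field_simp
    rw [hsplit]; nlinarith
  
lemma gibbs_point_eq {a b : ℝ} (ha : 0 ≤ a) (hb : 0 ≤ b) (hba : b = 0 → a = 0)
    (heq : a * Real.log (a / b) = a - b) : a = b := by
  rcases eq_or_lt_of_le ha with h | h
  · rcases eq_or_lt_of_le hb with hb0 | hb0
    · rw [← h, ← hb0]
    · exfalso; rw [← h] at heq; simp at heq; linarith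
  · have hb' : 0 < b := by
      rcases eq_or_lt_of_le hb with hb0 | hb0
      · exact absurd (hba hb0.symm) (ne_of_gt h)
      · exact hb0
    by_contra hne
    have hx : b / a ≠ 1 := by
      intro hx1
      exact hne (by field_simp at hx1; linarith)
    have hlog := Real.log_lt_sub_one_of_pos (div_pos hb' h) hx
    have hsplit : Real.log (a / b) = -Real.log (b / a) := by
      rw [Real.log_div hb'.ne' h.ne', Real.log_div h.ne' hb'.ne']; ring
    have h2 := mul_lt_mul_of_pos_left hlog h
    have h3 : a * (b / a - 1) = b - a := by field_simp
    rw [hsplit] at heq; nlinarith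

lemma gibbs_sum {ι : Type*} [Fintype ι] {a b : ι → ℝ} (ha : ∀ i, 0 ≤ a i)
    (hb : ∀ i, 0 ≤ b i) (hba : ∀ i, b i = 0 → a i = 0)
    (hs : ∑ i, a i = ∑ i, b i) :
    0 ≤ ∑ i, a i * Real.log (a i / b i) := by
  have h1 : ∑ i, (a i - b i) ≤ ∑ i, a i * Real.log (a i / b i) :=
    Finset.sum_le_sum fun i _ => gibbs_point (ha i) (hb i) (hba i)
  rw [Finset.sum_sub_distrib, hs, sub_self] at h1
  exact h1

lemma gibbs_sum_eq {ι : Type*} [Fintype ι] {a b : ι → ℝ} (ha : ∀ i, 0 ≤ a i)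
    (hb : ∀ i, 0 ≤ b i) (hba : ∀ i, b i = 0 → a i = 0)
    (hs : ∑ i, a i = ∑ i, b i)
    (heq : ∑ i, a i * Real.log (a i / b i) = 0) : ∀ i, a i = b i := by
  have hnn : ∀ i ∈ Finset.univ, (0:ℝ) ≤ a i * Real.log (a i / b i) - (a i - b i) :=
    fun i _ => sub_nonneg.mpr (gibbs_point (ha i) (hb i) (hba i))
  have hzero : ∑ i, (a i * Real.log (a i / b i) - (a i - b i)) = 0 := by
    rw [Finset.sum_sub_distrib, Finset.sum_sub_distrib, hs, sub_self, sub_zero, heq]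
  intro i
  have := (Finset.sum_eq_zero_iff_of_nonneg hnn).mp hzero i (Finset.mem_univ i)
  exact gibbs_point_eq (ha i) (hb i) (hba i) (by linarith)

/-- Log-sum inequality with equality case. -/
lemma log_sum {ι : Type*} [Fintype ι] {a b : ι → ℝ} (ha : ∀ i, 0 ≤ a i)
    (hb : ∀ i, 0 ≤ b i) (hba : ∀ i, b i = 0 → a i = 0)
    (hB : 0 < ∑ i, b i) :
    (∑ i, a i) * Real.log ((∑ i, a i) / (∑ i, b i)) ≤ ∑ i, a i * Real.log (a i / b i) ∧
    (∑ i, a i * Real.log (a i / b i) = (∑ i, a i) * Real.log ((∑ i, a i) / (∑ i, b i)) →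
      ∀ i, a i = ((∑ i, a i) / (∑ i, b i)) * b i) := by
  set A := ∑ i, a i with hA
  set B := ∑ i, b i with hBdef
  rcases eq_or_lt_of_le (Finset.sum_nonneg (fun i _ => ha i)) with hA0 | hA0
  · -- A = 0, all a i = 0
    have hz : ∀ i, a i = 0 := by
      intro i
      have := (Finset.sum_eq_zero_iff_of_nonneg (fun i _ => ha i)).mp hA0.symm i (Finset.mem_univ i)
      exact this
    have hAz : A = 0 := by rw [hA, ← hA0]
    constructor
    · have h1 : ∑ i, a i * Real.log (a i / b i) = 0 :=
        Finset.sum_eq_zero fun i _ => by rw [hz i]; simp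
      rw [h1, hAz]; simp
    · intro _ i; rw [hz i, hAz]; simp
  · -- A > 0
    have hc : 0 < A / B := div_pos hA0 hB
    have hkey : ∀ i, a i * Real.log (a i / b i)
        = a i * Real.log (a i / (A / B * b i)) + a i * Real.log (A / B) := by
      intro i
      rcases eq_or_lt_of_le (ha i) with h0 | h0
      · rw [← h0]; ring
      · have hbi : 0 < b i := by
          rcases eq_or_lt_of_le (hb i) with hb0 | hb0
          · exact absurd (hba i hb0.symm) (ne_of_gt h0)
          · exact hb0
        have : a i / b i = a i / (A / B * b i) * (A / B) := by
          field_simp; ring_nf; exact (mul_inv_cancel₀ (show A ≠ 0 from hA0.ne')).symm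
        rw [this, Real.log_mul (by positivity) hc.ne', mul_add]
    have hsum2 : ∑ i, a i * Real.log (a i / b i)
        = (∑ i, a i * Real.log (a i / (A / B * b i))) + A * Real.log (A / B) := by
      rw [Finset.sum_congr rfl (fun i _ => hkey i), Finset.sum_add_distrib, ← Finset.sum_mul, ← hA]
    have hg : 0 ≤ ∑ i, a i * Real.log (a i / (A / B * b i)) := by
      apply gibbs_sum ha (fun i => mul_nonneg hc.le (hb i))
      · intro i hi
        rcases mul_eq_zero.mp hi with h | h
        · exact absurd h hc.ne'
        · exact hba i h
      · rw [← Finset.mul_sum, ← hBdef, div_mul_cancel₀ _ hB.ne']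
    constructor
    · rw [hsum2]; linarith
    · intro heq
      rw [hsum2] at heq
      have hz : ∑ i, a i * Real.log (a i / (A / B * b i)) = 0 := by linarith
      have := gibbs_sum_eq ha (fun i => mul_nonneg hc.le (hb i))
        (fun i hi => by
          rcases mul_eq_zero.mp hi with h | h
          · exact absurd h hc.ne'
          · exact hba i h)
        (by rw [← Finset.mul_sum, ← hBdef, div_mul_cancel₀ _ hB.ne']) hz
      exact this

end Aux
section Struct

variable {Ω : Type*} [Fintype Ω]

lemma sum4_swap {M : Type*} [AddCommMonoid M] (f : Ω → Ω → Ω → Ω → M) :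
    ∑ a, ∑ b, ∑ c, ∑ d, f a b c d = ∑ c, ∑ d, ∑ a, ∑ b, f a b c d := by
  calc ∑ a, ∑ b, ∑ c, ∑ d, f a b c d
      = ∑ a, ∑ c, ∑ b, ∑ d, f a b c d :=
        Finset.sum_congr rfl fun a _ => Finset.sum_comm
    _ = ∑ c, ∑ a, ∑ b, ∑ d, f a b c d := Finset.sum_comm
    _ = ∑ c, ∑ a, ∑ d, ∑ b, f a b c d :=
        Finset.sum_congr rfl fun c _ => Finset.sum_congr rfl fun a _ => Finset.sum_comm
    _ = ∑ c, ∑ d, ∑ a, ∑ b, f a b c d :=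
        Finset.sum_congr rfl fun c _ => Finset.sum_comm

variable (Q : Ω → Ω → Ω → Ω → ℝ) (p : Ω → ℝ)

lemma pair2_nonneg (hQ0 : ∀ σ σ' τ τ', 0 ≤ Q σ σ' τ τ') (hp0 : ∀ σ, 0 ≤ p σ) :
    ∀ τ τ', 0 ≤ pair2 Q p τ τ' := fun τ τ' =>
  Finset.sum_nonneg fun σ _ => Finset.sum_nonneg fun σ' _ =>
    mul_nonneg (mul_nonneg (hp0 σ) (hp0 σ')) (hQ0 σ σ' τ τ')

lemma stepQ_row (τ : Ω) : stepQ Q p τ = ∑ τ', pair2 Q p τ τ' := by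
  unfold stepQ pair2
  calc ∑ σ, ∑ σ', ∑ τ', p σ * p σ' * Q σ σ' τ τ'
      = ∑ σ, ∑ τ', ∑ σ', p σ * p σ' * Q σ σ' τ τ' :=
        Finset.sum_congr rfl fun σ _ => Finset.sum_comm
    _ = ∑ τ', ∑ σ, ∑ σ', p σ * p σ' * Q σ σ' τ τ' := Finset.sum_comm

lemma pair2_swap (hsym1 : ∀ σ σ' τ τ', Q σ σ' τ τ' = Q σ σ' τ' τ) (τ τ' : Ω) :
    pair2 Q p τ τ' = pair2 Q p τ' τ := by
  unfold pair2
  exact Finset.sum_congr rfl fun σ _ => Finset.sum_congr rfl fun σ' _ => by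
    rw [hsym1]

lemma stepQ_col (hsym1 : ∀ σ σ' τ τ', Q σ σ' τ τ' = Q σ σ' τ' τ) (τ' : Ω) :
    stepQ Q p τ' = ∑ τ, pair2 Q p τ τ' := by
  rw [stepQ_row]
  exact Finset.sum_congr rfl fun τ _ => pair2_swap Q p hsym1 τ' τ

lemma stepQ_nonneg (hQ0 : ∀ σ σ' τ τ', 0 ≤ Q σ σ' τ τ') (hp0 : ∀ σ, 0 ≤ p σ) :
    ∀ τ, 0 ≤ stepQ Q p τ := fun τ => by
  rw [stepQ_row]
  exact Finset.sum_nonneg fun τ' _ => pair2_nonneg Q p hQ0 hp0 τ τ'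

lemma pair2_le_row (hQ0 : ∀ σ σ' τ τ', 0 ≤ Q σ σ' τ τ') (hp0 : ∀ σ, 0 ≤ p σ)
    (τ τ' : Ω) : pair2 Q p τ τ' ≤ stepQ Q p τ := by
  rw [stepQ_row]
  exact Finset.single_le_sum (fun x _ => pair2_nonneg Q p hQ0 hp0 τ x) (Finset.mem_univ τ')

lemma pair2_sum (hQ1 : ∀ σ σ', ∑ τ, ∑ τ', Q σ σ' τ τ' = 1) (hp1 : ∑ σ, p σ = 1) :
    ∑ τ, ∑ τ', pair2 Q p τ τ' = 1 := by
  unfold pair2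
  rw [sum4_swap (fun τ τ' σ σ' => p σ * p σ' * Q σ σ' τ τ')]
  have h1 : ∀ σ σ', ∑ τ, ∑ τ', p σ * p σ' * Q σ σ' τ τ' = p σ * p σ' := by
    intro σ σ'
    simp_rw [← Finset.mul_sum]
    rw [hQ1, mul_one]
  rw [Finset.sum_congr rfl fun σ _ => Finset.sum_congr rfl fun σ' _ => h1 σ σ']
  rw [← Finset.sum_mul_sum, hp1, mul_one]

lemma stepQ_sum (hQ1 : ∀ σ σ', ∑ τ, ∑ τ', Q σ σ' τ τ' = 1) (hp1 : ∑ σ, p σ = 1) :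
    ∑ τ, stepQ Q p τ = 1 := by
  rw [Finset.sum_congr rfl fun τ _ => stepQ_row Q p τ]
  exact pair2_sum Q p hQ1 hp1

lemma stepQ_pos (hQ0 : ∀ σ σ' τ τ', 0 ≤ Q σ σ' τ τ')
    (hdiag : ∀ σ σ', 0 < Q σ σ' σ σ') (hp0 : ∀ σ, 0 ≤ p σ)
    {ε : ℝ} (hε : 0 < ε) (hlow : ∀ σ, ε ≤ p σ) (τ : Ω) : 0 < stepQ Q p τ := by
  unfold stepQ
  apply Finset.sum_pos' (fun σ _ => Finset.sum_nonneg fun σ' _ => Finset.sum_nonneg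
    fun τ' _ => mul_nonneg (mul_nonneg (hp0 σ) (hp0 σ')) (hQ0 σ σ' τ τ'))
  refine ⟨τ, Finset.mem_univ τ, ?_⟩
  apply Finset.sum_pos' (fun σ' _ => Finset.sum_nonneg fun τ' _ =>
    mul_nonneg (mul_nonneg (hp0 τ) (hp0 σ')) (hQ0 τ σ' τ τ'))
  refine ⟨τ, Finset.mem_univ τ, ?_⟩
  apply Finset.sum_pos' (fun τ' _ =>
    mul_nonneg (mul_nonneg (hp0 τ) (hp0 τ)) (hQ0 τ τ τ τ'))
  refine ⟨τ, Finset.mem_univ τ, ?_⟩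
  have hpτ : 0 < p τ := lt_of_lt_of_le hε (hlow τ)
  exact mul_pos (mul_pos hpτ hpτ) (hdiag τ τ)

lemma klD_nonneg (ν : Ω → ℝ) (hp0 : ∀ σ, 0 ≤ p σ) (hp1 : ∑ σ, p σ = 1)
    (hν0 : ∀ τ, 0 < ν τ) (hν1 : ∑ τ, ν τ = 1) : 0 ≤ klD p ν :=
  gibbs_sum hp0 (fun τ => (hν0 τ).le) (fun τ h => absurd h (hν0 τ).ne') (hp1.trans hν1.symm)

lemma klD_eq_zero (ν : Ω → ℝ) (hp0 : ∀ σ, 0 ≤ p σ) (hp1 : ∑ σ, p σ = 1)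
    (hν0 : ∀ τ, 0 < ν τ) (hν1 : ∑ τ, ν τ = 1) (h : klD p ν = 0) : p = ν :=
  funext (gibbs_sum_eq hp0 (fun τ => (hν0 τ).le) (fun τ h => absurd h (hν0 τ).ne')
    (hp1.trans hν1.symm) h)

lemma klD_self (ν : Ω → ℝ) (hν0 : ∀ τ, 0 < ν τ) : klD ν ν = 0 := by
  unfold klD
  exact Finset.sum_eq_zero fun τ _ => by rw [div_self (hν0 τ).ne']; simp

end Struct
section KLStep

variable {Ω : Type*} [Fintype Ω]

lemma kl_step (Q : Ω → Ω → Ω → Ω → ℝ) (ν p : Ω → ℝ)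
    (hQ0 : ∀ σ σ' τ τ', 0 ≤ Q σ σ' τ τ')
    (hQ1 : ∀ σ σ', ∑ τ, ∑ τ', Q σ σ' τ τ' = 1)
    (hsym1 : ∀ σ σ' τ τ', Q σ σ' τ τ' = Q σ σ' τ' τ)
    (hdiag : ∀ σ σ', 0 < Q σ σ' σ σ')
    (hν0 : ∀ τ, 0 < ν τ)
    (hbal : ∀ τ τ', ∑ σ, ∑ σ', ν σ * ν σ' * Q σ σ' τ τ' = ν τ * ν τ')
    (hp0 : ∀ σ, 0 ≤ p σ) (hp1 : ∑ σ, p σ = 1) :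
    klD (stepQ Q p) ν ≤ klD p ν ∧
    (klD (stepQ Q p) ν = klD p ν → ∀ τ τ', pair2 Q p τ τ' = p τ * p τ') := by
  set s : Ω → ℝ := stepQ Q p with hs
  set P : Ω → Ω → ℝ := pair2 Q p with hP
  -- step 1: double-sum expression for 2 kl(p‖ν)
  have hterm : ∀ σ σ', (p σ * p σ') * Real.log ((p σ * p σ') / (ν σ * ν σ'))
      = p σ' * (p σ * Real.log (p σ / ν σ)) + p σ * (p σ' * Real.log (p σ' / ν σ')) := by
    intro σ σ'
    rcases eq_or_lt_of_le (hp0 σ) with h1 | h1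
    · rw [← h1]; simp
    rcases eq_or_lt_of_le (hp0 σ') with h2 | h2
    · rw [← h2]; simp
    rw [Real.log_div (mul_ne_zero h1.ne' h2.ne') (mul_ne_zero (hν0 σ).ne' (hν0 σ').ne'),
        Real.log_mul h1.ne' h2.ne', Real.log_mul (hν0 σ).ne' (hν0 σ').ne',
        Real.log_div h1.ne' (hν0 σ).ne', Real.log_div h2.ne' (hν0 σ').ne']
    ring
  have htwo : ∑ σ, ∑ σ', (p σ * p σ') * Real.log ((p σ * p σ') / (ν σ * ν σ'))
      = 2 * klD p ν := by
    rw [Finset.sum_congr rfl fun σ _ => Finset.sum_congr rfl fun σ' _ => hterm σ σ']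
    have h1 : ∀ σ, ∑ σ', (p σ' * (p σ * Real.log (p σ / ν σ))
        + p σ * (p σ' * Real.log (p σ' / ν σ')))
        = p σ * Real.log (p σ / ν σ) + p σ * klD p ν := by
      intro σ
      rw [Finset.sum_add_distrib, ← Finset.sum_mul, hp1, one_mul, ← Finset.mul_sum]
      rfl
    rw [Finset.sum_congr rfl fun σ _ => h1 σ, Finset.sum_add_distrib,
        ← Finset.sum_mul, hp1, one_mul]
    show klD p ν + klD p ν = 2 * klD p ν
    ring
  -- step 2: insert the kernel
  have hins : ∀ σ σ', (p σ * p σ') * Real.log ((p σ * p σ') / (ν σ * ν σ'))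
      = ∑ τ, ∑ τ', (p σ * p σ' * Q σ σ' τ τ')
        * Real.log ((p σ * p σ' * Q σ σ' τ τ') / (ν σ * ν σ' * Q σ σ' τ τ')) := by
    intro σ σ'
    have hterm2 : ∀ τ τ', (p σ * p σ' * Q σ σ' τ τ')
        * Real.log ((p σ * p σ' * Q σ σ' τ τ') / (ν σ * ν σ' * Q σ σ' τ τ'))
        = (p σ * p σ') * Real.log ((p σ * p σ') / (ν σ * ν σ')) * Q σ σ' τ τ' := by
      intro τ τ'
      rcases eq_or_lt_of_le (hQ0 σ σ' τ τ') with hq | hq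
      · rw [← hq]; simp
      · rw [mul_div_mul_right _ _ hq.ne']; ring
    rw [Finset.sum_congr rfl fun τ _ => Finset.sum_congr rfl fun τ' _ => hterm2 τ τ']
    simp_rw [← Finset.mul_sum]
    rw [hQ1, mul_one]
  -- the inner sums
  set I2 : Ω → Ω → ℝ := fun τ τ' => ∑ σ, ∑ σ', (p σ * p σ' * Q σ σ' τ τ')
      * Real.log ((p σ * p σ' * Q σ σ' τ τ') / (ν σ * ν σ' * Q σ σ' τ τ')) with hI2
  have hswap : ∑ τ, ∑ τ', I2 τ τ' = 2 * klD p ν := by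
    rw [← htwo, Finset.sum_congr rfl fun σ _ => Finset.sum_congr rfl fun σ' _ => hins σ σ']
    exact (sum4_swap _).symm
  -- per-pair log-sum inequality
  have hls : ∀ τ τ', P τ τ' * Real.log (P τ τ' / (ν τ * ν τ')) ≤ I2 τ τ' ∧
      (I2 τ τ' = P τ τ' * Real.log (P τ τ' / (ν τ * ν τ')) →
        ∀ σ σ', p σ * p σ' * Q σ σ' τ τ'
          = (P τ τ' / (ν τ * ν τ')) * (ν σ * ν σ' * Q σ σ' τ τ')) := by
    intro τ τ'
    have ha : ∀ z : Ω × Ω, 0 ≤ p z.1 * p z.2 * Q z.1 z.2 τ τ' :=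
      fun z => mul_nonneg (mul_nonneg (hp0 _) (hp0 _)) (hQ0 _ _ _ _)
    have hb : ∀ z : Ω × Ω, 0 ≤ ν z.1 * ν z.2 * Q z.1 z.2 τ τ' :=
      fun z => mul_nonneg (mul_nonneg (hν0 _).le (hν0 _).le) (hQ0 _ _ _ _)
    have hba : ∀ z : Ω × Ω, ν z.1 * ν z.2 * Q z.1 z.2 τ τ' = 0 →
        p z.1 * p z.2 * Q z.1 z.2 τ τ' = 0 := by
      intro z hz
      rcases mul_eq_zero.mp hz with h | h
      · exact absurd h (mul_pos (hν0 _) (hν0 _)).ne'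
      · rw [h, mul_zero]
    have hsa : ∑ z : Ω × Ω, p z.1 * p z.2 * Q z.1 z.2 τ τ' = P τ τ' := by
      rw [Fintype.sum_prod_type]; rfl
    have hsb : ∑ z : Ω × Ω, ν z.1 * ν z.2 * Q z.1 z.2 τ τ' = ν τ * ν τ' := by
      rw [Fintype.sum_prod_type]; exact hbal τ τ'
    have hB : 0 < ∑ z : Ω × Ω, ν z.1 * ν z.2 * Q z.1 z.2 τ τ' := by
      rw [hsb]; exact mul_pos (hν0 τ) (hν0 τ')
    obtain ⟨h1, h2⟩ := log_sum ha hb hba hB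
    rw [hsa, hsb] at h1 h2
    have hI : I2 τ τ' = ∑ z : Ω × Ω, (p z.1 * p z.2 * Q z.1 z.2 τ τ')
        * Real.log ((p z.1 * p z.2 * Q z.1 z.2 τ τ') / (ν z.1 * ν z.2 * Q z.1 z.2 τ τ')) := by
      rw [hI2, Fintype.sum_prod_type]
    constructor
    · rw [hI]; exact h1
    · intro heq σ σ'
      have := h2 (by rw [← hI]; exact heq) (σ, σ')
      exact this
  -- splitting of the middle quantity
  have hP0 : ∀ τ τ', 0 ≤ P τ τ' := pair2_nonneg Q p hQ0 hp0
  have hsplit : ∀ τ τ', P τ τ' * Real.log (P τ τ' / (ν τ * ν τ'))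
      = P τ τ' * Real.log (P τ τ' / (s τ * s τ'))
        + (P τ τ' * Real.log (s τ / ν τ) + P τ τ' * Real.log (s τ' / ν τ')) := by
    intro τ τ'
    rcases eq_or_lt_of_le (hP0 τ τ') with h0 | h0
    · rw [← h0]; simp
    · have hsτ : 0 < s τ := lt_of_lt_of_le h0 (pair2_le_row Q p hQ0 hp0 τ τ')
      have hsτ' : 0 < s τ' := by
        have h0' : 0 < pair2 Q p τ' τ := by
          rw [pair2_swap Q p hsym1 τ' τ]; exact h0
        exact lt_of_lt_of_le h0' (pair2_le_row Q p hQ0 hp0 τ' τ)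
      have key : P τ τ' / (ν τ * ν τ')
          = P τ τ' / (s τ * s τ') * (s τ / ν τ) * (s τ' / ν τ') := by
        have h6 : P τ τ' * s τ * s τ' = (s τ * s τ') * P τ τ' := by ring
        have h7 : s τ * s τ' * ν τ * ν τ' = (s τ * s τ') * (ν τ * ν τ') := by ring
        rw [div_mul_div_comm, div_mul_div_comm, h6, h7,
          mul_div_mul_left _ _ (ne_of_gt (mul_pos hsτ hsτ'))]
      rw [key,
        Real.log_mul (mul_ne_zero (div_pos h0 (mul_pos hsτ hsτ')).ne'
          (div_pos hsτ (hν0 τ)).ne') (div_pos hsτ' (hν0 τ')).ne',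
        Real.log_mul (div_pos h0 (mul_pos hsτ hsτ')).ne' (div_pos hsτ (hν0 τ)).ne']
      ring
  -- the Gibbs term is nonnegative
  have hs1 : ∑ τ, s τ = 1 := stepQ_sum Q p hQ1 hp1
  have hP1 : ∑ τ, ∑ τ', P τ τ' = 1 := pair2_sum Q p hQ1 hp1
  have hs0 : ∀ τ, 0 ≤ s τ := stepQ_nonneg Q p hQ0 hp0
  have hG : 0 ≤ ∑ τ, ∑ τ', P τ τ' * Real.log (P τ τ' / (s τ * s τ')) := by
    have ha : ∀ z : Ω × Ω, 0 ≤ P z.1 z.2 := fun z => hP0 _ _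
    have hb : ∀ z : Ω × Ω, 0 ≤ s z.1 * s z.2 := fun z => mul_nonneg (hs0 _) (hs0 _)
    have hba : ∀ z : Ω × Ω, s z.1 * s z.2 = 0 → P z.1 z.2 = 0 := by
      intro z hz
      rcases mul_eq_zero.mp hz with h | h
      · refine le_antisymm ?_ (hP0 _ _)
        rw [← h]; exact pair2_le_row Q p hQ0 hp0 z.1 z.2
      · refine le_antisymm ?_ (hP0 _ _)
        rw [← h]
        calc pair2 Q p z.1 z.2 = pair2 Q p z.2 z.1 := pair2_swap Q p hsym1 z.1 z.2
          _ ≤ s z.2 := pair2_le_row Q p hQ0 hp0 z.2 z.1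
    have hsum : ∑ z : Ω × Ω, P z.1 z.2 = ∑ z : Ω × Ω, s z.1 * s z.2 := by
      rw [Fintype.sum_prod_type, Fintype.sum_prod_type, hP1]
      rw [← Finset.sum_mul_sum, hs1, mul_one]
    have := gibbs_sum ha hb hba hsum
    rwa [Fintype.sum_prod_type] at this
  -- marginal identifications
  have hrow : ∑ τ, ∑ τ', P τ τ' * Real.log (s τ / ν τ) = klD s ν := by
    have h1 : ∀ τ, ∑ τ', P τ τ' * Real.log (s τ / ν τ) = s τ * Real.log (s τ / ν τ) := by
      intro τ
      rw [← Finset.sum_mul, ← stepQ_row]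
    rw [Finset.sum_congr rfl fun τ _ => h1 τ]; rfl
  have hcol : ∑ τ, ∑ τ', P τ τ' * Real.log (s τ' / ν τ') = klD s ν := by
    rw [Finset.sum_comm]
    have h1 : ∀ τ', ∑ τ, P τ τ' * Real.log (s τ' / ν τ') = s τ' * Real.log (s τ' / ν τ') := by
      intro τ'
      rw [← Finset.sum_mul, ← stepQ_col Q p hsym1]
    rw [Finset.sum_congr rfl fun τ' _ => h1 τ']; rfl
  have hM_eq : ∑ τ, ∑ τ', P τ τ' * Real.log (P τ τ' / (ν τ * ν τ'))
      = (∑ τ, ∑ τ', P τ τ' * Real.log (P τ τ' / (s τ * s τ'))) + 2 * klD s ν := by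
    rw [Finset.sum_congr rfl fun τ _ => Finset.sum_congr rfl fun τ' _ => hsplit τ τ']
    simp only [Finset.sum_add_distrib]
    rw [hrow, hcol]
    ring
  have hM_le : ∑ τ, ∑ τ', P τ τ' * Real.log (P τ τ' / (ν τ * ν τ')) ≤ 2 * klD p ν := by
    rw [← hswap]
    exact Finset.sum_le_sum fun τ _ => Finset.sum_le_sum fun τ' _ => (hls τ τ').1
  constructor
  · linarith [hM_eq, hM_le, hG]
  · intro heq τ τ'
    have hMval : ∑ τ, ∑ τ', P τ τ' * Real.log (P τ τ' / (ν τ * ν τ')) = 2 * klD p ν := by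
      have : (∑ τ, ∑ τ', P τ τ' * Real.log (P τ τ' / (ν τ * ν τ'))) ≥ 2 * klD p ν := by
        rw [hM_eq, heq] at *
        linarith [hG]
      linarith [hM_le]
    have hdiff : ∑ τ, ∑ τ', (I2 τ τ' - P τ τ' * Real.log (P τ τ' / (ν τ * ν τ'))) = 0 := by
      simp only [Finset.sum_sub_distrib]
      rw [hswap, hMval, sub_self]
    have hnn : ∀ τ ∈ Finset.univ, (0:ℝ) ≤ ∑ τ', (I2 τ τ' - P τ τ' * Real.log (P τ τ' / (ν τ * ν τ'))) :=
      fun τ _ => Finset.sum_nonneg fun τ' _ => sub_nonneg.mpr (hls τ τ').1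
    have h1 := (Finset.sum_eq_zero_iff_of_nonneg hnn).mp hdiff τ (Finset.mem_univ τ)
    have hnn2 : ∀ τ' ∈ Finset.univ, (0:ℝ) ≤ I2 τ τ' - P τ τ' * Real.log (P τ τ' / (ν τ * ν τ')) :=
      fun τ' _ => sub_nonneg.mpr (hls τ τ').1
    have h2 := (Finset.sum_eq_zero_iff_of_nonneg hnn2).mp h1 τ' (Finset.mem_univ τ')
    have heq2 : I2 τ τ' = P τ τ' * Real.log (P τ τ' / (ν τ * ν τ')) := by linarith
    have h3 := (hls τ τ').2 heq2 τ τ'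
    -- cancel the positive diagonal kernel entry
    have hQd := hdiag τ τ'
    have hνν : (0:ℝ) < ν τ * ν τ' := mul_pos (hν0 τ) (hν0 τ')
    have h4 : p τ * p τ' * Q τ τ' τ τ'
        = (P τ τ' / (ν τ * ν τ') * (ν τ * ν τ')) * Q τ τ' τ τ' := by
      rw [h3]; ring
    have h5 := mul_right_cancel₀ hQd.ne' h4
    rw [div_mul_cancel₀ _ hνν.ne'] at h5
    exact h5.symm

end KLStep
section Cont

variable {Ω : Type*} [Fintype Ω]

lemma continuous_stepQ (Q : Ω → Ω → Ω → Ω → ℝ) : Continuous (stepQ Q) :=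
  continuous_pi fun _ => continuous_finset_sum _ fun σ _ => continuous_finset_sum _
    fun σ' _ => continuous_finset_sum _ fun _ _ =>
      ((continuous_apply σ).mul (continuous_apply σ')).mul continuous_const

lemma continuousAt_klD (ν g : Ω → ℝ) (hν0 : ∀ τ, 0 < ν τ) (hg : ∀ τ, 0 < g τ) :
    ContinuousAt (fun f : Ω → ℝ => klD f ν) g := by
  have h : ∀ τ ∈ Finset.univ, ContinuousAt (fun f : Ω → ℝ => f τ * Real.log (f τ / ν τ)) g := by
    intro τ _
    have h1 : ContinuousAt (fun f : Ω → ℝ => f τ) g := (continuous_apply τ).continuousAt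
    have h2 : ContinuousAt (fun f : Ω → ℝ => f τ / ν τ) g :=
      h1.div continuousAt_const (hν0 τ).ne'
    exact h1.mul (h2.log (div_pos (hg τ) (hν0 τ)).ne')
  exact tendsto_finset_sum _ h

end Cont
set_option maxHeartbeats 1000000 in
/-- for a normalized, symmetric, positive-diagonal, balanced kernel,
any irreducible initial distribution converges to a strictly positive fixed point. -/
theorem convergence_of_irreducible {Ω : Type*} [Fintype Ω]
    (Q : Ω → Ω → Ω → Ω → ℝ) (μ p : Ω → ℝ)
    (hQ0 : ∀ σ σ' τ τ', 0 ≤ Q σ σ' τ τ')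
    (hQ1 : ∀ σ σ', ∑ τ, ∑ τ', Q σ σ' τ τ' = 1)
    (hsym1 : ∀ σ σ' τ τ', Q σ σ' τ τ' = Q σ σ' τ' τ)
    (hsym2 : ∀ σ σ' τ τ', Q σ σ' τ τ' = Q σ' σ τ τ')
    (hdiag : ∀ σ σ', 0 < Q σ σ' σ σ')
    (hμ0 : ∀ σ, 0 < μ σ) (hμ1 : ∑ σ, μ σ = 1)
    (hbal : ∀ τ τ', ∑ σ, ∑ σ', μ σ * μ σ' * Q σ σ' τ τ' = μ τ * μ τ')
    (hp0 : ∀ σ, 0 ≤ p σ) (hp1 : ∑ σ, p σ = 1)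
    (hirr : ∃ ε > (0 : ℝ), ∃ t₀ : ℕ, ∀ t ≥ t₀, ∀ τ, ε ≤ (stepQ Q)^[t] p τ) :
    ∃ ν : Ω → ℝ, (∀ τ, 0 < ν τ) ∧ (∑ τ, ν τ = 1) ∧ stepQ Q ν = ν ∧
      Tendsto (fun t => (stepQ Q)^[t] p) atTop (nhds ν) := by
  obtain ⟨ε, hε, t₀, hirr'⟩ := hirr
  set x : ℕ → Ω → ℝ := fun t => (stepQ Q)^[t] p with hx
  have hxsucc : ∀ t, x (t + 1) = stepQ Q (x t) := fun t => Function.iterate_succ_apply' (stepQ Q) t p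
  have hx0 : ∀ t τ, 0 ≤ x t τ := by
    intro t; induction t with
    | zero => simpa [hx] using hp0
    | succ n ih => rw [hxsucc]; exact stepQ_nonneg Q (x n) hQ0 ih
  have hx1 : ∀ t, ∑ τ, x t τ = 1 := by
    intro t; induction t with
    | zero => simpa [hx] using hp1
    | succ n ih => rw [hxsucc]; exact stepQ_sum Q (x n) hQ1 ih
  have hxle : ∀ t τ, x t τ ≤ 1 := by
    intro t τ
    have h1 := Finset.single_le_sum (fun τ' _ => hx0 t τ') (Finset.mem_univ τ)
    rwa [hx1 t] at h1
  -- the compact set where the trajectory eventually lives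
  set C : Set (Ω → ℝ) := {f | (∀ τ, ε ≤ f τ) ∧ (∀ τ, f τ ≤ 1) ∧ ∑ τ, f τ = 1} with hC
  have hCclosed : IsClosed C := by
    have hCeq : C = (⋂ τ, {f : Ω → ℝ | ε ≤ f τ}) ∩
        ((⋂ τ, {f : Ω → ℝ | f τ ≤ 1}) ∩ {f : Ω → ℝ | ∑ τ, f τ = 1}) := by
      ext f; simp [hC, Set.mem_iInter]
    rw [hCeq]
    exact (isClosed_iInter fun τ => isClosed_le continuous_const (continuous_apply τ)).inter
      ((isClosed_iInter fun τ => isClosed_le (continuous_apply τ) continuous_const).inter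
        (isClosed_eq (continuous_finset_sum _ fun τ _ => continuous_apply τ) continuous_const))
  have hCcompact : IsCompact C := by
    apply IsCompact.of_isClosed_subset
      (isCompact_Icc (a := fun _ : Ω => ε) (b := fun _ : Ω => (1:ℝ))) hCclosed
    intro f hf
    exact Set.mem_Icc.mpr ⟨fun τ => hf.1 τ, fun τ => hf.2.1 τ⟩
  have hmemC : ∀ t, t₀ ≤ t → x t ∈ C := fun t ht =>
    ⟨fun τ => hirr' t ht τ, fun τ => hxle t τ, hx1 t⟩
  have hmem : ∀ t, x (t + t₀) ∈ C := fun t => hmemC (t + t₀) (Nat.le_add_left t₀ t)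
  obtain ⟨q, hqC, φ, hφ, hconv⟩ := hCcompact.tendsto_subseq hmem
  have hq_low : ∀ τ, ε ≤ q τ := hqC.1
  have hq0 : ∀ τ, 0 < q τ := fun τ => lt_of_lt_of_le hε (hq_low τ)
  have hq1 : ∑ τ, q τ = 1 := hqC.2.2
  have hxconv : Tendsto (fun k => x (φ k + t₀)) atTop (nhds q) := hconv
  have hφ_top : Tendsto (fun k => φ k + t₀) atTop atTop :=
    tendsto_atTop_mono (fun k => Nat.le_add_right (φ k) t₀) hφ.tendsto_atTop
  -- the relative entropy w.r.t. μ is nonincreasing, hence convergent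
  have hH_anti : Antitone fun t => klD (x t) μ := antitone_nat_of_succ_le fun t => by
    rw [hxsucc]
    exact (kl_step Q μ (x t) hQ0 hQ1 hsym1 hdiag hμ0 hbal (hx0 t) (hx1 t)).1
  have hH_bdd : BddBelow (Set.range fun t => klD (x t) μ) := by
    refine ⟨0, ?_⟩
    rintro y ⟨t, rfl⟩
    exact klD_nonneg (x t) μ (hx0 t) (hx1 t) hμ0 hμ1
  have hHlim := tendsto_atTop_ciInf hH_anti hH_bdd
  set h : ℝ := ⨅ t, klD (x t) μ with hh
  -- identify the entropy of q and of stepQ Q q with the limit value h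
  have hHq : klD q μ = h := by
    have h1 := Filter.Tendsto.comp (continuousAt_klD μ q hμ0 hq0) hxconv
    exact tendsto_nhds_unique h1 (hHlim.comp hφ_top)
  have hSq0 : ∀ τ, 0 < stepQ Q q τ :=
    stepQ_pos Q q hQ0 hdiag (fun τ => (hq0 τ).le) hε hq_low
  have hSqconv : Tendsto (fun k => x (φ k + t₀ + 1)) atTop (nhds (stepQ Q q)) := by
    have h1 : Tendsto (fun k => stepQ Q (x (φ k + t₀))) atTop (nhds (stepQ Q q)) :=
      Filter.Tendsto.comp ((continuous_stepQ Q).continuousAt (x := q)) hxconv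
    have h2 : (fun k => stepQ Q (x (φ k + t₀))) = fun k => x (φ k + t₀ + 1) := by
      funext k; rw [hxsucc]
    rwa [h2] at h1
  have hHSq : klD (stepQ Q q) μ = h := by
    have h1 := Filter.Tendsto.comp (continuousAt_klD μ (stepQ Q q) hμ0 hSq0) hSqconv
    have h2 : Tendsto (fun k => φ k + t₀ + 1) atTop atTop :=
      tendsto_atTop_mono (fun k => Nat.le_succ (φ k + t₀)) hφ_top
    exact tendsto_nhds_unique h1 (hHlim.comp h2)
  -- equality in the entropy inequality: q is a balanced fixed point
  have hpair := (kl_step Q μ q hQ0 hQ1 hsym1 hdiag hμ0 hbal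
    (fun τ => (hq0 τ).le) hq1).2 (by rw [hHSq, hHq])
  have hbal_q : ∀ τ τ', ∑ σ, ∑ σ', q σ * q σ' * Q σ σ' τ τ' = q τ * q τ' :=
    fun τ τ' => hpair τ τ'
  have hfix : stepQ Q q = q := by
    funext τ
    rw [stepQ_row, Finset.sum_congr rfl fun τ' _ => hpair τ τ', ← Finset.mul_sum, hq1, mul_one]
  -- relative entropy w.r.t. q is also nonincreasing and tends to 0
  have hD_anti : Antitone fun t => klD (x t) q := antitone_nat_of_succ_le fun t => by
    rw [hxsucc]
    exact (kl_step Q q (x t) hQ0 hQ1 hsym1 hdiag hq0 hbal_q (hx0 t) (hx1 t)).1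
  have hD0 : ∀ t, 0 ≤ klD (x t) q := fun t => klD_nonneg (x t) q (hx0 t) (hx1 t) hq0 hq1
  have hDsub : Tendsto ((fun f => klD f q) ∘ fun k => x (φ k + t₀)) atTop (nhds 0) := by
    have h1 := Filter.Tendsto.comp (continuousAt_klD q q hq0 hq0) hxconv
    have h2 : Tendsto ((fun f => klD f q) ∘ fun k => x (φ k + t₀)) atTop
        (nhds (klD q q)) := h1
    rwa [klD_self q hq0] at h2
  have hDlim : Tendsto (fun t => klD (x t) q) atTop (nhds 0) := by
    have hDi := tendsto_atTop_ciInf hD_anti ⟨0, by rintro y ⟨t, rfl⟩; exact hD0 t⟩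
    have hinf : (⨅ t, klD (x t) q) = 0 := tendsto_nhds_unique (hDi.comp hφ_top) hDsub
    rwa [hinf] at hDi
  -- conclude convergence of the trajectory to q
  refine ⟨q, hq0, hq1, hfix, ?_⟩
  rw [Metric.tendsto_atTop]
  intro δ hδ
  set K : Set (Ω → ℝ) := C ∩ {f | δ ≤ dist f q} with hK
  have hKcompact : IsCompact K :=
    hCcompact.inter_right (isClosed_le continuous_const (continuous_id.dist continuous_const))
  rcases K.eq_empty_or_nonempty with hKe | hKne
  · refine ⟨t₀, fun t ht => ?_⟩
    by_contra hcon
    have hxK : x t ∈ K := ⟨hmemC t ht, not_lt.mp hcon⟩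
    rw [hKe] at hxK
    exact hxK
  · have hcont : ContinuousOn (fun f => klD f q) K := fun f hf =>
      (continuousAt_klD q f hq0 fun τ => lt_of_lt_of_le hε (hf.1.1 τ)).continuousWithinAt
    obtain ⟨q', hq'K, hmin⟩ := hKcompact.exists_isMinOn hKne hcont
    have hq'pos : ∀ τ, 0 ≤ q' τ := fun τ => (lt_of_lt_of_le hε (hq'K.1.1 τ)).le
    have hmpos : 0 < klD q' q := by
      rcases eq_or_lt_of_le (klD_nonneg q' q hq'pos hq'K.1.2.2 hq0 hq1) with h0 | h0
      · exfalso
        have hq'q : q' = q := klD_eq_zero q' q hq'pos hq'K.1.2.2 hq0 hq1 h0.symm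
        have := hq'K.2
        rw [hq'q] at this
        simp only [Set.mem_setOf_eq, dist_self] at this
        linarith
      · exact h0
    obtain ⟨N, hN⟩ := eventually_atTop.mp ((tendsto_order.1 hDlim).2 (klD q' q) hmpos)
    refine ⟨max N t₀, fun t ht => ?_⟩
    by_contra hcon
    have hxK : x t ∈ K := ⟨hmemC t (le_trans (le_max_right _ _) ht), ?_⟩
    · have h1 := isMinOn_iff.mp hmin (x t) hxK
      have h2 := hN t (le_trans (le_max_left _ _) ht)
      linarith
    · exact not_lt.mp hcon
end

section
/- Every Ising Gibbs measure is stationary for the nonlinear block dynamics: for any symmetric interaction matrix J and any external field vector h, the Gibbs measure μ_{J,h} satisfies μ_{J,h} ∘ μ_{J,h} = μ_{J,h}, where ∘ is the quadratic block-exchange operation with kernel Q_J. -/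
/-!
Detailed balance. Draw (σ, σ') from μ_{J,h} ⊗ μ_{J,h} and then Λ as in Q_J. The block exchange
(σ, σ') ↦ (σ'_Λσ_{Λᶜ}, σ_Λσ'_{Λᶜ}) is an involution preserving the joint weight of (σ, σ', Λ):
the field part of μ_{J,h} is a product over sites, at each of which the pair of spins is only
permuted, and the normaliser of Q_J is unchanged because exchanging Λ turns the summation block A
into A ∆ Λ. Hence the first output configuration has the law of the first input, μ_{J,h}.
-/

/-- The ±1 spin value of a Boolean. -/
def spin (b : Bool) : ℝ := if b then 1 else -1

/-- Unnormalized Ising weight with interaction J and external fields h. -/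
noncomputable def isingWeight {n : ℕ} (J : Fin n → Fin n → ℝ) (h : Fin n → ℝ)
    (σ : Fin n → Bool) : ℝ :=
  Real.exp ((1 / 2) * ∑ x, ∑ y, J x y * spin (σ x) * spin (σ y)
      + ∑ x, h x * spin (σ x))

/-- Ising Gibbs measure with interaction J and external fields h. -/
noncomputable def isingGibbs {n : ℕ} (J : Fin n → Fin n → ℝ) (h : Fin n → ℝ)
    (σ : Fin n → Bool) : ℝ :=
  isingWeight J h σ / ∑ τ, isingWeight J h τ

/-- The configuration equal to σ on Λ and to σ' off Λ. -/
def mix {n : ℕ} (Λ : Finset (Fin n)) (σ σ' : Fin n → Bool) : Fin n → Bool :=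
  fun x => if x ∈ Λ then σ x else σ' x

/-- The nonlinear block dynamics kernel Q_J, defined from the zero-field Gibbs
measure: (τ,τ') = (σ'_Λσ_{Λᶜ}, σ_Λσ'_{Λᶜ}) with Λ chosen with probability
proportional to μ_J(σ'_Λσ_{Λᶜ})μ_J(σ_Λσ'_{Λᶜ}). -/
noncomputable def blockKernel {n : ℕ} (J : Fin n → Fin n → ℝ)
    (σ σ' τ τ' : Fin n → Bool) : ℝ :=
  (∑ Λ : Finset (Fin n),
      isingGibbs J (fun _ => 0) (mix Λ σ' σ) * isingGibbs J (fun _ => 0) (mix Λ σ σ')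
        * (if τ = mix Λ σ' σ then 1 else 0) * (if τ' = mix Λ σ σ' then 1 else 0))
    / (∑ A : Finset (Fin n),
        isingGibbs J (fun _ => 0) (mix A σ' σ) * isingGibbs J (fun _ => 0) (mix A σ σ'))

noncomputable def pairPartition {n : ℕ} (J : Fin n → Fin n → ℝ) (σ σ' : Fin n → Bool) : ℝ :=
  ∑ A : Finset (Fin n),
    isingGibbs J (fun _ => 0) (mix A σ' σ) * isingGibbs J (fun _ => 0) (mix A σ σ')

/-- Joint law of the input pair (σ, σ') drawn from μ_{J,h} ⊗ μ_{J,h} and the exchanged block Λ. -/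
noncomputable def blockJointWeight {n : ℕ} (J : Fin n → Fin n → ℝ) (h : Fin n → ℝ)
    (σ σ' : Fin n → Bool) (Λ : Finset (Fin n)) : ℝ :=
  isingGibbs J h σ * isingGibbs J h σ' *
    (isingGibbs J (fun _ => 0) (mix Λ σ' σ) * isingGibbs J (fun _ => 0) (mix Λ σ σ'))
    / pairPartition J σ σ'

section Mix

variable {n : ℕ}

lemma mix_mix_self (Λ : Finset (Fin n)) (σ σ' : Fin n → Bool) :
    mix Λ (mix Λ σ σ') (mix Λ σ' σ) = σ := by
  funext x
  by_cases hx : x ∈ Λ <;> simp [mix, hx]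

lemma mix_mix_symmDiff (Λ A : Finset (Fin n)) (σ σ' : Fin n → Bool) :
    mix A (mix Λ σ σ') (mix Λ σ' σ) = mix (symmDiff A Λ) σ' σ := by
  funext x
  by_cases hA : x ∈ A <;> by_cases hΛ : x ∈ Λ <;> simp [mix, Finset.mem_symmDiff, hA, hΛ]

def mixSwap (Λ : Finset (Fin n)) : Equiv.Perm ((Fin n → Bool) × (Fin n → Bool)) :=
  Function.Involutive.toPerm (fun p => (mix Λ p.2 p.1, mix Λ p.1 p.2))
    fun p => Prod.ext (mix_mix_self Λ p.1 p.2) (mix_mix_self Λ p.2 p.1)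

lemma sum_sum_comp_mixSwap {M : Type*} [AddCommMonoid M] (Λ : Finset (Fin n))
    (f : (Fin n → Bool) → (Fin n → Bool) → M) :
    ∑ σ, ∑ σ', f (mix Λ σ' σ) (mix Λ σ σ') = ∑ σ, ∑ σ', f σ σ' := by
  rw [← Fintype.sum_prod_type', ← Fintype.sum_prod_type']
  exact Equiv.sum_comp (mixSwap Λ) fun p => f p.1 p.2

lemma sum_add_mix_swap {M : Type*} [AddCommMonoid M] (Λ : Finset (Fin n))
    (f : Fin n → Bool → M) (σ σ' : Fin n → Bool) :
    ∑ x, (f x (mix Λ σ' σ x) + f x (mix Λ σ σ' x)) = ∑ x, (f x (σ x) + f x (σ' x)) := by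
  refine Finset.sum_congr rfl fun x _ => ?_
  by_cases hx : x ∈ Λ <;> simp [mix, hx, add_comm]

end Mix

section Ising

variable {n : ℕ} (J : Fin n → Fin n → ℝ) (h : Fin n → ℝ)

lemma isingWeight_eq_mul_exp (σ : Fin n → Bool) :
    isingWeight J h σ = isingWeight J (fun _ => 0) σ * Real.exp (∑ x, h x * spin (σ x)) := by
  simp only [isingWeight, zero_mul, Finset.sum_const_zero, add_zero, ← Real.exp_add]

lemma isingWeight_pos (σ : Fin n → Bool) : 0 < isingWeight J h σ := Real.exp_pos _

lemma isingGibbs_pos (σ : Fin n → Bool) : 0 < isingGibbs J h σ :=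
  div_pos (isingWeight_pos J h σ)
    (Finset.sum_pos (fun τ _ => isingWeight_pos J h τ) Finset.univ_nonempty)

lemma sum_isingGibbs : ∑ σ, isingGibbs J h σ = 1 := by
  simp only [isingGibbs, ← Finset.sum_div]
  exact div_self (Finset.sum_pos (fun τ _ => isingWeight_pos J h τ) Finset.univ_nonempty).ne'

lemma isingWeight_mix_swap (Λ : Finset (Fin n)) (σ σ' : Fin n → Bool) :
    isingWeight J h (mix Λ σ' σ) * isingWeight J h (mix Λ σ σ') *
        (isingWeight J (fun _ => 0) σ * isingWeight J (fun _ => 0) σ') =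
      isingWeight J h σ * isingWeight J h σ' *
        (isingWeight J (fun _ => 0) (mix Λ σ' σ) * isingWeight J (fun _ => 0) (mix Λ σ σ')) := by
  have hfield : Real.exp (∑ x, h x * spin (mix Λ σ' σ x)) * Real.exp (∑ x, h x * spin (mix Λ σ σ' x))
      = Real.exp (∑ x, h x * spin (σ x)) * Real.exp (∑ x, h x * spin (σ' x)) := by
    simp only [← Real.exp_add, ← Finset.sum_add_distrib]
    rw [sum_add_mix_swap Λ (fun x b => h x * spin b)]
  rw [isingWeight_eq_mul_exp J h σ, isingWeight_eq_mul_exp J h σ',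
    isingWeight_eq_mul_exp J h (mix Λ σ' σ), isingWeight_eq_mul_exp J h (mix Λ σ σ')]
  linear_combination
    isingWeight J (fun _ => 0) σ * isingWeight J (fun _ => 0) σ' *
      isingWeight J (fun _ => 0) (mix Λ σ' σ) * isingWeight J (fun _ => 0) (mix Λ σ σ') * hfield

lemma isingGibbs_mix_swap (Λ : Finset (Fin n)) (σ σ' : Fin n → Bool) :
    isingGibbs J h (mix Λ σ' σ) * isingGibbs J h (mix Λ σ σ') *
        (isingGibbs J (fun _ => 0) σ * isingGibbs J (fun _ => 0) σ') =
      isingGibbs J h σ * isingGibbs J h σ' *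
        (isingGibbs J (fun _ => 0) (mix Λ σ' σ) * isingGibbs J (fun _ => 0) (mix Λ σ σ')) := by
  simp only [isingGibbs, div_mul_div_comm, isingWeight_mix_swap]

lemma pairPartition_pos (σ σ' : Fin n → Bool) : 0 < pairPartition J σ σ' :=
  Finset.sum_pos (fun _ _ => mul_pos (isingGibbs_pos _ _ _) (isingGibbs_pos _ _ _))
    Finset.univ_nonempty

lemma pairPartition_mix_swap (Λ : Finset (Fin n)) (σ σ' : Fin n → Bool) :
    pairPartition J (mix Λ σ' σ) (mix Λ σ σ') = pairPartition J σ σ' := by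
  have hinv : Function.Involutive fun A : Finset (Fin n) => symmDiff A Λ := fun A =>
    symmDiff_symmDiff_cancel_right Λ A
  refine Fintype.sum_bijective _ hinv.bijective _ _ fun A => ?_
  rw [mix_mix_symmDiff, mix_mix_symmDiff]

lemma blockJointWeight_mix_swap (Λ : Finset (Fin n)) (σ σ' : Fin n → Bool) :
    blockJointWeight J h (mix Λ σ' σ) (mix Λ σ σ') Λ = blockJointWeight J h σ σ' Λ := by
  rw [blockJointWeight, blockJointWeight, pairPartition_mix_swap, mix_mix_self, mix_mix_self,
    isingGibbs_mix_swap]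

lemma sum_blockJointWeight (σ σ' : Fin n → Bool) :
    ∑ Λ, blockJointWeight J h σ σ' Λ = isingGibbs J h σ * isingGibbs J h σ' := by
  simp only [blockJointWeight, ← Finset.sum_div, ← Finset.mul_sum]
  rw [← pairPartition.eq_1, mul_div_assoc, div_self (pairPartition_pos J σ σ').ne', mul_one]

lemma sum_mul_blockKernel_right (σ σ' τ : Fin n → Bool) :
    ∑ τ', isingGibbs J h σ * isingGibbs J h σ' * blockKernel J σ σ' τ τ' =
      ∑ Λ, blockJointWeight J h σ σ' Λ * if τ = mix Λ σ' σ then 1 else 0 := by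
  simp only [blockKernel, blockJointWeight, ← pairPartition.eq_1, Finset.mul_sum, Finset.sum_div]
  rw [Finset.sum_comm]
  refine Finset.sum_congr rfl fun Λ _ => ?_
  rw [Finset.sum_eq_single (mix Λ σ σ') (fun τ' _ hτ' => by simp [hτ']) (by simp)]
  simp only [if_true]
  ring

end Ising

theorem gibbs_stationary_general {n : ℕ} (J : Fin n → Fin n → ℝ)
    (h : Fin n → ℝ) :
    ∀ τ : Fin n → Bool,
      ∑ σ, ∑ σ', ∑ τ', isingGibbs J h σ * isingGibbs J h σ' * blockKernel J σ σ' τ τ'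
        = isingGibbs J h τ := by
  intro τ
  calc ∑ σ, ∑ σ', ∑ τ', isingGibbs J h σ * isingGibbs J h σ' * blockKernel J σ σ' τ τ'
      = ∑ Λ, ∑ σ, ∑ σ', blockJointWeight J h σ σ' Λ * if τ = mix Λ σ' σ then 1 else 0 := by
        simp only [sum_mul_blockKernel_right]
        exact (Finset.sum_congr rfl fun _ _ => Finset.sum_comm).trans Finset.sum_comm
    _ = ∑ Λ, ∑ σ, ∑ σ', blockJointWeight J h σ σ' Λ * if τ = σ then 1 else 0 := by
        refine Finset.sum_congr rfl fun Λ _ => ?_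
        simpa only [blockJointWeight_mix_swap] using
          sum_sum_comp_mixSwap Λ fun σ σ' => blockJointWeight J h σ σ' Λ * if τ = σ then 1 else 0
    _ = ∑ σ', ∑ Λ, blockJointWeight J h τ σ' Λ := by
        simp only [mul_ite, mul_one, mul_zero, Finset.sum_ite_irrel, Finset.sum_const_zero,
          Finset.sum_ite_eq, Finset.mem_univ, if_true]
        exact Finset.sum_comm
    _ = isingGibbs J h τ := by
        simp only [sum_blockJointWeight]
        rw [← Finset.mul_sum, sum_isingGibbs, mul_one]

/-- every Ising Gibbs measure μ_{J,h} is stationary for the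
nonlinear block dynamics: μ_{J,h} ∘ μ_{J,h} = μ_{J,h}. -/
theorem gibbs_stationary {n : ℕ} (J : Fin n → Fin n → ℝ)
    (hJsym : ∀ x y, J x y = J y x) (h : Fin n → ℝ) :
    ∀ τ : Fin n → Bool,
      ∑ σ, ∑ σ', ∑ τ', isingGibbs J h σ * isingGibbs J h σ' * blockKernel J σ σ' τ τ'
        = isingGibbs J h τ :=
  gibbs_stationary_general J h
end
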